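/- In intuitionistic predicate logic extended with strong negation ∼ satisfying ∼A → ¬A, the de Morgan quantifier laws ∼∀xA ↔ ∃x∼A and ∼∃xA ↔ ∀x∼A, and potential omniscience ¬¬(A ∨ ∼A), the double negation shift ∀x¬¬A → ¬¬∀xA is derivable. -/
import Mathlib


inductive QFm : Type where
  | atom : Nat → List Nat → QFm
  | bot : QFm
  | snot : QFm → QFm
  | and : QFm → QFm → QFm
  | or : QFm → QFm → QFm
  | imp : QFm → QFm → QFm
  | all : Nat → QFm → QFm
  | ex : Nat → QFm → QFm
deriving DecidableEq

def qneg (A : QFm) : QFm := QFm.imp A QFm.bot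
def qiff (A B : QFm) : QFm := QFm.and (QFm.imp A B) (QFm.imp B A)

/-- Substitution of the variable `t` for free occurrences of the variable `x`. -/
def qsubst (x t : Nat) : QFm → QFm
  | .atom n args => .atom n (args.map fun v => if v = x then t else v)
  | .bot => .bot
  | .snot A => .snot (qsubst x t A)
  | .and A B => .and (qsubst x t A) (qsubst x t B)
  | .or A B => .or (qsubst x t A) (qsubst x t B)
  | .imp A B => .imp (qsubst x t A) (qsubst x t B)
  | .all y A => if y = x then .all y A else .all y (qsubst x t A)
  | .ex y A => if y = x then .ex y A else .ex y (qsubst x t A)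

def freeIn (x : Nat) : QFm → Prop
  | .atom _ args => x ∈ args
  | .bot => False
  | .snot A => freeIn x A
  | .and A B => freeIn x A ∨ freeIn x B
  | .or A B => freeIn x A ∨ freeIn x B
  | .imp A B => freeIn x A ∨ freeIn x B
  | .all y A => x ≠ y ∧ freeIn x A
  | .ex y A => x ≠ y ∧ freeIn x A

/-- `t` is free for `x` in `A` (no capture on substitution). -/
def freeFor (t x : Nat) : QFm → Prop
  | .atom _ _ => True
  | .bot => True
  | .snot A => freeFor t x A
  | .and A B => freeFor t x A ∧ freeFor t x B
  | .or A B => freeFor t x A ∧ freeFor t x B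
  | .imp A B => freeFor t x A ∧ freeFor t x B
  | .all y A => x = y ∨ ((y ≠ t ∨ ¬ freeIn x A) ∧ freeFor t x A)
  | .ex y A => x = y ∨ ((y ≠ t ∨ ¬ freeIn x A) ∧ freeFor t x A)

/-- Intuitionistic predicate logic with strong negation ∼ satisfying
∼∼A ↔ A, ∼A → ¬A (i2), potential omniscience ¬¬(A ∨ ∼A) (i3), and the
quantifier de Morgan laws. -/
inductive QDeriv : QFm → Prop where
  | ax1 (A B) : QDeriv (QFm.imp A (QFm.imp B A))
  | ax2 (A B C) : QDeriv (QFm.imp (QFm.imp A (QFm.imp B C)) (QFm.imp (QFm.imp A B) (QFm.imp A C)))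
  | ax4 (A B) : QDeriv (QFm.imp (QFm.and A B) A)
  | ax5 (A B) : QDeriv (QFm.imp (QFm.and A B) B)
  | ax6 (A B C) : QDeriv (QFm.imp (QFm.imp C A) (QFm.imp (QFm.imp C B) (QFm.imp C (QFm.and A B))))
  | ax7 (A B) : QDeriv (QFm.imp A (QFm.or A B))
  | ax8 (A B) : QDeriv (QFm.imp B (QFm.or A B))
  | ax9 (A B C) : QDeriv (QFm.imp (QFm.imp A C) (QFm.imp (QFm.imp B C) (QFm.imp (QFm.or A B) C)))
  | ax10 (A) : QDeriv (QFm.imp QFm.bot A)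
  | ax11 (A : QFm) (x t : Nat) : freeFor t x A →
      QDeriv (QFm.imp (qsubst x t A) (QFm.ex x A))
  | ax12 (A B : QFm) (x : Nat) : ¬ freeIn x B →
      QDeriv (QFm.imp (QFm.all x (QFm.imp A B)) (QFm.imp (QFm.ex x A) B))
  | ax13 (A B : QFm) (x : Nat) : ¬ freeIn x B →
      QDeriv (QFm.imp (QFm.all x (QFm.imp B A)) (QFm.imp B (QFm.all x A)))
  | ax14 (A : QFm) (x t : Nat) : freeFor t x A →
      QDeriv (QFm.imp (QFm.all x A) (qsubst x t A))
  | gen (A x) : QDeriv A → QDeriv (QFm.all x A)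
  | mp {A B} : QDeriv (QFm.imp A B) → QDeriv A → QDeriv B
  | dne (A) : QDeriv (qiff (QFm.snot (QFm.snot A)) A)
  | dmAll (A x) : QDeriv (qiff (QFm.snot (QFm.all x A)) (QFm.ex x (QFm.snot A)))
  | dmEx (A x) : QDeriv (qiff (QFm.snot (QFm.ex x A)) (QFm.all x (QFm.snot A)))
  | i2 (A) : QDeriv (QFm.imp (QFm.snot A) (qneg A))
  | i3 (A) : QDeriv (qneg (qneg (QFm.or A (QFm.snot A))))


namespace DNSAux

lemma qsubst_self (x : Nat) (A : QFm) : qsubst x x A = A := by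
  induction A with
  | atom n args =>
    have : (fun v => if v = x then x else v) = id := by funext v; split <;> simp_all
    simp [qsubst, this]
  | bot => rfl
  | snot A ih => simp [qsubst, ih]
  | and A B ihA ihB => simp [qsubst, ihA, ihB]
  | or A B ihA ihB => simp [qsubst, ihA, ihB]
  | imp A B ihA ihB => simp [qsubst, ihA, ihB]
  | all y A ih => by_cases h : y = x <;> simp [qsubst, h, ih]
  | ex y A ih => by_cases h : y = x <;> simp [qsubst, h, ih]

lemma freeFor_self (x : Nat) (A : QFm) : freeFor x x A := by
  induction A with
  | atom n args => trivial
  | bot => trivial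
  | snot A ih => exact ih
  | and A B ihA ihB => exact ⟨ihA, ihB⟩
  | or A B ihA ihB => exact ⟨ihA, ihB⟩
  | imp A B ihA ihB => exact ⟨ihA, ihB⟩
  | all y A ih =>
    by_cases h : x = y
    · exact Or.inl h
    · exact Or.inr ⟨Or.inl (fun hy => h hy.symm), ih⟩
  | ex y A ih =>
    by_cases h : x = y
    · exact Or.inl h
    · exact Or.inr ⟨Or.inl (fun hy => h hy.symm), ih⟩

/-- Derivation from a list of hypotheses (propositional part only). -/
inductive Der : List QFm → QFm → Prop where
  | hyp {Γ A} : A ∈ Γ → Der Γ A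
  | thm {Γ A} : QDeriv A → Der Γ A
  | mp {Γ A B} : Der Γ (QFm.imp A B) → Der Γ A → Der Γ B

lemma imp_self (A : QFm) : QDeriv (QFm.imp A A) := by
  have h1 := QDeriv.ax2 A (QFm.imp A A) A
  have h2 := QDeriv.ax1 A (QFm.imp A A)
  have h3 := QDeriv.ax1 A A
  exact (h1.mp h2).mp h3

/-- Deduction theorem. -/
lemma ded {Γ : List QFm} {A B : QFm} (h : Der (A :: Γ) B) : Der Γ (QFm.imp A B) := by
  induction h with
  | hyp hm =>
    rcases List.mem_cons.mp hm with rfl | hm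
    · exact Der.thm (imp_self _)
    · exact Der.mp (Der.thm (QDeriv.ax1 _ _)) (Der.hyp hm)
  | thm hd => exact Der.mp (Der.thm (QDeriv.ax1 _ _)) (Der.thm hd)
  | mp h1 h2 ih1 ih2 => exact Der.mp (Der.mp (Der.thm (QDeriv.ax2 _ _ _)) ih1) ih2

lemma der_nil {A : QFm} (h : Der [] A) : QDeriv A := by
  induction h with
  | hyp hm => simp at hm
  | thm hd => exact hd
  | mp _ _ ih1 ih2 => exact ih1.mp ih2

lemma imp_trans {A B C : QFm} (h1 : QDeriv (QFm.imp A B)) (h2 : QDeriv (QFm.imp B C)) :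
    QDeriv (QFm.imp A C) := by
  have := (QDeriv.ax2 A B C).mp ((QDeriv.ax1 (QFm.imp B C) A).mp h2)
  exact this.mp h1

end DNSAux

/-- The double negation shift `∀x¬¬A → ¬¬∀xA` is derivable. -/
theorem double_negation_shift (A : QFm) (x : Nat) :
    QDeriv (QFm.imp (QFm.all x (qneg (qneg A))) (qneg (qneg (QFm.all x A)))) := by
  classical
  open DNSAux in
  -- step 1 : ∀x¬¬A → ¬∃x¬A
  have s1 : QDeriv (QFm.imp (QFm.all x (qneg (qneg A))) (qneg (QFm.ex x (qneg A)))) :=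
    QDeriv.ax12 (qneg A) QFm.bot x (by simp [freeIn])
  -- ∃-intro : ¬A → ∃x¬A
  have s2 : QDeriv (QFm.imp (qneg A) (QFm.ex x (qneg A))) := by
    have := QDeriv.ax11 (qneg A) x x (freeFor_self x (qneg A))
    rwa [qsubst_self] at this
  -- ∼A → ∃x¬A, generalized, hence ∃x∼A → ∃x¬A
  have s3 : QDeriv (QFm.imp (QFm.ex x (QFm.snot A)) (QFm.ex x (qneg A))) := by
    have h := QDeriv.gen _ x (imp_trans (QDeriv.i2 A) s2)
    exact (QDeriv.ax12 (QFm.snot A) (QFm.ex x (qneg A)) x (by simp [freeIn])).mp h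
  -- ∼∀xA → ∃x∼A
  have s4 : QDeriv (QFm.imp (QFm.snot (QFm.all x A)) (QFm.ex x (QFm.snot A))) :=
    (QDeriv.ax4 _ _).mp (QDeriv.dmAll A x)
  have i3 := QDeriv.i3 (QFm.all x A)
  -- now propositional reasoning
  set H := QFm.all x (qneg (qneg A)) with hH
  set K := qneg (QFm.all x A) with hK
  apply der_nil
  apply ded
  apply ded
  -- context [K, H] ⊢ ⊥
  have hH' : Der [K, H] H := Der.hyp (by simp)
  have hK' : Der [K, H] K := Der.hyp (by simp)
  -- ¬∃x¬A
  have hne : Der [K, H] (qneg (QFm.ex x (qneg A))) := Der.mp (Der.thm s1) hH'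
  -- ∼∀xA → ⊥
  have hsn : Der [K, H] (qneg (QFm.snot (QFm.all x A))) := by
    apply ded
    have hH2 : Der [QFm.snot (QFm.all x A), K, H] H := Der.hyp (by simp)
    exact Der.mp (Der.mp (Der.thm s1) hH2)
      (Der.mp (Der.thm s3) (Der.mp (Der.thm s4) (Der.hyp (by simp))))
  -- (∀xA ∨ ∼∀xA) → ⊥
  have hor : Der [K, H] (qneg (QFm.or (QFm.all x A) (QFm.snot (QFm.all x A)))) :=
    Der.mp (Der.mp (Der.thm (QDeriv.ax9 _ _ QFm.bot)) hK') hsn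
  exact Der.mp (Der.thm i3) hor
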